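/- Let W be a closed linear sublattice of ℓᵖ(X, w) containing 1 (X countable, w summable positive weight, 1 ≤ p < ∞), and let ∼ be the relation x ∼ y iff f(x) = f(y) for all f ∈ W. Then W equals the closed linear span of the characteristic functions of the equivalence classes of ∼. -/

import Mathlib

/-!
Every point carries positive mass, so elements of `Lp` are genuine functions on `X` and the
lattice operations act pointwise. If `y` is not equivalent to `a`, some `f ∈ W` has
`f y ≠ f a`, and `(1 - |f - f a| / |f y - f a|)⁺ ∈ W` is a `[0, 1]`-valued cutoff equal to `1`
on the class of `a` and vanishing at `y`. Minima of finitely many such cutoffs stay in `W`;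
letting the finite sets exhaust `X`, dominated convergence makes the indicator of the class a
limit of elements of `W`. Conversely every `f ∈ W` is constant on classes, so its restriction
to a finite union of classes is a finite combination of class indicators, and these
restrictions converge to `f`, again by dominated convergence.
-/

open MeasureTheory Filter Topology
open scoped ENNReal

theorem Finset.exists_seq_eventually_mem (X : Type*) [Countable X] :
    ∃ s : ℕ → Finset X, ∀ x, ∀ᶠ n in atTop, x ∈ s n := by
  obtain ⟨s, hs⟩ := exists_seq_tendsto (atTop : Filter (Finset X))
  exact ⟨s, fun x => (hs.eventually (eventually_ge_atTop {x})).mono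
    fun _ hn => hn (Finset.mem_singleton_self x)⟩

namespace MeasureTheory

variable {α : Type*} {m : MeasurableSpace α} {μ : Measure α}

theorem eq_of_ae_eq_of_measure_singleton_ne_zero {β : Type*} (hμ : ∀ x, μ {x} ≠ 0)
    {f g : α → β} (h : f =ᵐ[μ] g) : f = g := by
  rwa [ae_eq_top.2 hμ, eventuallyEq_top] at h

section DominatedConvergence

variable {E : Type*} [NormedAddCommGroup E] {p : ℝ≥0∞}

theorem unifIntegrable_of_ae_norm_le (hp : 1 ≤ p) (hp' : p ≠ ∞) {f : ℕ → α → E} {g : α → ℝ}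
    (hg : MemLp g p μ) (hfg : ∀ n, ∀ᵐ x ∂μ, ‖f n x‖ ≤ g x) : UnifIntegrable f p μ := by
  intro ε hε
  obtain ⟨δ, hδ, hgδ⟩ := hg.eLpNorm_indicator_le hp hp' hε
  refine ⟨δ, hδ, fun n s hs hμs => (eLpNorm_mono_ae ?_).trans (hgδ s hs hμs)⟩
  filter_upwards [hfg n] with x hx
  by_cases hxs : x ∈ s
  · simpa [Set.indicator_of_mem hxs] using hx.trans (le_abs_self _)
  · simp [Set.indicator_of_notMem hxs]

theorem Lp.tendsto_of_tendsto_ae_of_dominated [IsFiniteMeasure μ] [Fact (1 ≤ p)] (hp : p ≠ ∞)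
    {u : ℕ → Lp E p μ} {v : Lp E p μ} {g : α → ℝ} (hg : MemLp g p μ)
    (hug : ∀ n, ∀ᵐ x ∂μ, ‖u n x‖ ≤ g x)
    (huv : ∀ᵐ x ∂μ, Tendsto (fun n => u n x) atTop (𝓝 (v x))) :
    Tendsto u atTop (𝓝 v) := by
  rw [Lp.tendsto_Lp_iff_tendsto_eLpNorm']
  exact tendsto_Lp_finite_of_tendsto_ae Fact.out hp (fun n => Lp.aestronglyMeasurable (u n))
    (Lp.memLp v) (unifIntegrable_of_ae_norm_le Fact.out hp hg hug) huv

theorem Lp.coeFn_finset_sum {ι : Type*} (s : Finset ι) (f : ι → Lp E p μ) :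
    ⇑(∑ i ∈ s, f i) =ᵐ[μ] ∑ i ∈ s, ⇑(f i) := by
  classical
  induction s using Finset.induction_on with
  | empty => simpa using Lp.coeFn_zero E p μ
  | insert i s hi ih =>
    filter_upwards [Lp.coeFn_add (f i) (∑ j ∈ s, f j), ih] with x hadd hsum
    simp only [Finset.sum_insert hi, hadd, Pi.add_apply, hsum]

end DominatedConvergence

section Fibers

variable {X : Type*} [MeasurableSpace X] {μ : Measure X} {p : ℝ≥0∞} [Fact (1 ≤ p)]

theorem Lp.mem_closure_span_indicator_fibers [Countable X] [MeasurableSingletonClass X]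
    [IsFiniteMeasure μ] (hp : p ≠ ∞) {Q : Type*} (π : X → Q) {f : Lp ℝ p μ}
    (hf : Function.FactorsThrough f π) :
    f ∈ closure (Submodule.span ℝ {χ : Lp ℝ p μ | ∃ a : X,
      ⇑χ =ᵐ[μ] (π ⁻¹' {π a}).indicator fun _ => (1 : ℝ)} : Set (Lp ℝ p μ)) := by
  classical
  obtain ⟨s, hs⟩ := Finset.exists_seq_eventually_mem X
  let χ : Q → Lp ℝ p μ := fun q =>
    indicatorConstLp p (π ⁻¹' {q}).to_countable.measurableSet (measure_ne_top μ _) 1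
  let c : Q → ℝ := Function.extend π f 0
  let F : ℕ → Lp ℝ p μ := fun n => ∑ q ∈ (s n).image π, c q • χ q
  have hF_mem : ∀ n, F n ∈ Submodule.span ℝ {χ : Lp ℝ p μ | ∃ a : X,
      ⇑χ =ᵐ[μ] (π ⁻¹' {π a}).indicator fun _ => (1 : ℝ)} := fun n =>
    Submodule.sum_mem _ fun q hq => by
      obtain ⟨a, -, rfl⟩ := Finset.mem_image.1 hq
      exact Submodule.smul_mem _ _ (Submodule.subset_span ⟨a, indicatorConstLp_coeFn⟩)
  have hF_apply : ∀ n, ∀ᵐ x ∂μ, F n x = if π x ∈ (s n).image π then f x else 0 := by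
    intro n
    have hterm : ∀ᵐ x ∂μ, ∀ q ∈ (s n).image π,
        (c q • χ q) x = if π x = q then c q else 0 := by
      rw [eventually_all_finset]
      intro q _
      have hχ : ⇑(χ q) =ᵐ[μ] (π ⁻¹' {q}).indicator fun _ => (1 : ℝ) := indicatorConstLp_coeFn
      filter_upwards [Lp.coeFn_smul (c q) (χ q), hχ] with x hsmul hχx
      simp [hsmul, hχx, Set.indicator_apply]
    filter_upwards [Lp.coeFn_finset_sum ((s n).image π) (fun q => c q • χ q), hterm]
      with x hsum hterm
    rw [hsum, Finset.sum_apply, Finset.sum_congr rfl hterm, Finset.sum_ite_eq]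
    simp only [c, hf.extend_apply]
  have hF_lim : Tendsto F atTop (𝓝 f) := by
    refine Lp.tendsto_of_tendsto_ae_of_dominated hp (Lp.memLp f).norm
      (fun n => (hF_apply n).mono fun x hx => ?_) ?_
    · rw [hx]
      split_ifs <;> simp
    · filter_upwards [ae_all_iff.2 hF_apply] with x hx
      refine tendsto_const_nhds.congr' ((hs x).mono fun n hn => ?_)
      simp only [hx n, if_pos (Finset.mem_image_of_mem π hn)]
  exact mem_closure_of_tendsto hF_lim (Eventually.of_forall hF_mem)

end Fibers

section Cutoffs

variable {X : Type*}

structure IsCutoff (C F : Set X) (g : X → ℝ) : Prop where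
  mem_Icc : ∀ x, g x ∈ Set.Icc 0 1
  eq_one : ∀ x ∈ C, g x = 1
  eq_zero : ∀ x ∈ F, g x = 0

theorem IsCutoff.inf {C F F' : Set X} {g g' : X → ℝ} (hg : IsCutoff C F g)
    (hg' : IsCutoff C F' g') : IsCutoff C (F ∪ F') (g ⊓ g') where
  mem_Icc x := ⟨le_min (hg.mem_Icc x).1 (hg'.mem_Icc x).1, inf_le_left.trans (hg.mem_Icc x).2⟩
  eq_one x hx := by simp [hg.eq_one x hx, hg'.eq_one x hx]
  eq_zero x hx := by
    rcases hx with hx | hx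
    · simpa [hg.eq_zero x hx] using (hg'.mem_Icc x).1
    · simpa [hg'.eq_zero x hx] using (hg.mem_Icc x).1

variable [MeasurableSpace X] {μ : Measure X} {p : ℝ≥0∞}

theorem Lp.mem_of_forall_finset_exists_cutoff [Fact (1 ≤ p)] [Countable X] [IsFiniteMeasure μ]
    (hp : p ≠ ∞)
    {S : Set (Lp ℝ p μ)} (hS : IsClosed S) {C : Set X}
    (hcut : ∀ F : Finset X, Disjoint C ↑F → ∃ g ∈ S, IsCutoff C ↑F ⇑g) {χ : Lp ℝ p μ}
    (hχ : ⇑χ =ᵐ[μ] C.indicator fun _ => (1 : ℝ)) : χ ∈ S := by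
  classical
  obtain ⟨s, hs⟩ := Finset.exists_seq_eventually_mem X
  choose g hgS hg using fun n => hcut ((s n).filter (· ∉ C))
    (Set.disjoint_left.2 fun x hxC hx => (Finset.mem_filter.1 hx).2 hxC)
  refine hS.mem_of_tendsto (Lp.tendsto_of_tendsto_ae_of_dominated hp (memLp_const (1 : ℝ))
    (fun n => ae_of_all _ fun x => ?_) ?_) (Eventually.of_forall hgS)
  · obtain ⟨h0, h1⟩ := (hg n).mem_Icc x
    rwa [Real.norm_of_nonneg h0]
  · filter_upwards [hχ] with x hx
    rw [hx]
    by_cases hxC : x ∈ C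
    · rw [Set.indicator_of_mem hxC]
      exact tendsto_const_nhds.congr fun n => ((hg n).eq_one x hxC).symm
    · rw [Set.indicator_of_notMem hxC]
      exact tendsto_const_nhds.congr' ((hs x).mono fun n hn =>
        ((hg n).eq_zero x (by simp [hn, hxC])).symm)

theorem Lp.exists_cutoff_finset (hμ : ∀ x, μ {x} ≠ 0) {S : Set (Lp ℝ p μ)}
    (hinf : ∀ f ∈ S, ∀ g ∈ S, f ⊓ g ∈ S) {one : Lp ℝ p μ} (hone : ∀ x, one x = 1)
    (hone' : one ∈ S) {C : Set X} (hpt : ∀ y ∉ C, ∃ g ∈ S, IsCutoff C {y} ⇑g) (F : Finset X)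
    (hF : Disjoint C ↑F) : ∃ g ∈ S, IsCutoff C ↑F ⇑g := by
  classical
  induction F using Finset.induction_on with
  | empty => exact ⟨one, hone', fun x => by simp [hone], fun x _ => hone x, by simp⟩
  | insert y F _ ih =>
    rw [Finset.coe_insert, Set.disjoint_insert_right] at hF
    obtain ⟨gy, hgyS, hgy⟩ := hpt y hF.1
    obtain ⟨gF, hgFS, hgF⟩ := ih hF.2
    refine ⟨gy ⊓ gF, hinf _ hgyS _ hgFS, ?_⟩
    rw [eq_of_ae_eq_of_measure_singleton_ne_zero hμ (Lp.coeFn_inf gy gF), Finset.coe_insert,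
      Set.insert_eq]
    exact hgy.inf hgF

theorem Lp.exists_cutoff_singleton [Fact (1 ≤ p)] (hμ : ∀ x, μ {x} ≠ 0) {W : Submodule ℝ (Lp ℝ p μ)}
    (hsup : ∀ f ∈ W, ∀ g ∈ W, f ⊔ g ∈ W) {one : Lp ℝ p μ} (hone : ∀ x, one x = 1)
    (hone' : one ∈ W) {a y : X} (hy : y ∉ {x | ∀ f ∈ W, f x = f a}) :
    ∃ g ∈ W, IsCutoff {x | ∀ f ∈ W, f x = f a} {y} ⇑g := by
  obtain ⟨f, hf, hfy⟩ : ∃ f ∈ W, f y ≠ f a := by simpa using hy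
  set t := |f y - f a|
  have ht : 0 < t := abs_pos.2 (sub_ne_zero.2 hfy)
  have hW : (one - t⁻¹ • |f - f a • one|) ⊔ 0 ∈ W := by
    have hfa : f - f a • one ∈ W := W.sub_mem hf (W.smul_mem _ hone')
    have habs : |f - f a • one| ∈ W := hsup _ hfa _ (W.neg_mem hfa)
    exact hsup _ (W.sub_mem hone' (W.smul_mem _ habs)) _ W.zero_mem
  have hval : ⇑((one - t⁻¹ • |f - f a • one|) ⊔ 0) =
      fun x => max (1 - t⁻¹ * |f x - f a|) 0 := by
    refine eq_of_ae_eq_of_measure_singleton_ne_zero hμ ?_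
    filter_upwards [Lp.coeFn_sup (one - t⁻¹ • |f - f a • one|) 0,
      Lp.coeFn_sub one (t⁻¹ • |f - f a • one|), Lp.coeFn_smul t⁻¹ |f - f a • one|,
      Lp.coeFn_abs (f - f a • one), Lp.coeFn_sub f (f a • one), Lp.coeFn_smul (f a) one,
      Lp.coeFn_zero ℝ p μ] with x h1 h2 h3 h4 h5 h6 h7
    simp only [h1, Pi.sup_apply, h2, Pi.sub_apply, h3, Pi.smul_apply, h4, h5, h6, h7, hone,
      smul_eq_mul, mul_one, Pi.zero_apply]
  refine ⟨_, hW, ⟨fun x => ?_, fun x hx => ?_, fun x hx => ?_⟩⟩ <;> rw [hval]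
  · have : 0 ≤ t⁻¹ * |f x - f a| := by positivity
    exact ⟨le_max_right _ _, max_le (by linarith) zero_le_one⟩
  · simp [hx f hf]
  · simp [Set.mem_singleton_iff.1 hx, t, inv_mul_cancel₀ ht.ne']

end Cutoffs

end MeasureTheory

theorem W_eq_closed_span_of_indicators
    {X : Type*} [Countable X] [MeasurableSpace X] [MeasurableSingletonClass X]
    (w : X → ℝ) (hw : ∀ x, 0 < w x)
    (μ : Measure X) (hμ : ∀ x, μ {x} = ENNReal.ofReal (w x))
    (p : ENNReal) [Fact (1 ≤ p)] (hp : p ≠ ⊤)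
    (W : Submodule ℝ (Lp ℝ p μ)) (hclosed : IsClosed (W : Set (Lp ℝ p μ)))
    (hlat : ∀ f ∈ W, ∀ g ∈ W, f ⊔ g ∈ W ∧ f ⊓ g ∈ W)
    (one : Lp ℝ p μ) (hone : ∀ᵐ x ∂μ, one x = 1) (hone' : one ∈ W) :
    (W : Set (Lp ℝ p μ)) = closure (Submodule.span ℝ
      {χ : Lp ℝ p μ | ∃ a : X,
        ⇑χ =ᵐ[μ] Set.indicator {x | ∀ f ∈ W, f x = f a} (fun _ => (1 : ℝ))}) := by
  have hμ0 : ∀ x, μ {x} ≠ 0 := fun x => by simpa [hμ] using hw x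
  have hone1 : ∀ x, one x = 1 := congrFun (eq_of_ae_eq_of_measure_singleton_ne_zero hμ0 hone)
  have : IsFiniteMeasure μ := ⟨((memLp_const_iff (zero_lt_one.trans_le Fact.out).ne' hp).1
    ((Lp.memLp one).ae_eq hone)).resolve_left one_ne_zero⟩
  let π : X → W → ℝ := fun x f => (f : Lp ℝ p μ) x
  have hfiber : ∀ a, π ⁻¹' {π a} = {x | ∀ f ∈ W, f x = f a} := fun a => Set.ext fun x =>
    ⟨fun h f hf => congrFun h ⟨f, hf⟩, fun h => funext fun f => h f f.2⟩
  refine subset_antisymm (fun f hf => ?_) (closure_minimal ?_ hclosed)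
  · simpa only [hfiber] using
      Lp.mem_closure_span_indicator_fibers hp π (f := f) fun x y hxy => congrFun hxy ⟨f, hf⟩
  · refine Submodule.span_le.2 fun χ ⟨a, hχ⟩ => ?_
    refine Lp.mem_of_forall_finset_exists_cutoff hp hclosed ?_ hχ
    exact Lp.exists_cutoff_finset hμ0 (fun f hf g hg => (hlat f hf g hg).2) hone1 hone'
      fun y hy => Lp.exists_cutoff_singleton hμ0 (fun f hf g hg => (hlat f hf g hg).1) hone1
        hone' hy
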